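/- Let (W,S) be a Coxeter system with a weight function q_s > 0 constant on odd-dihedral-connected generators, and let I, J ⊆ S with W_I and W_J finite. If w is the minimal length representative of W_I w W_J, then Σ_{z ∈ W_I w W_J} q_z = N(I) · q_w · N(J) / N(J ∩ w⁻¹Iw), where N(K) = Σ_{v ∈ W_K} q_v and q_v is the product of q_s over a reduced expression of v, and J ∩ w⁻¹Iw = {t ∈ J : w t w⁻¹ ∈ I}. -/

import Mathlib

/-!
Put `K = J ∩ w⁻¹Iw` and let `D` be the set of minimal length representatives of the cosets
`W_K d ⊆ W_J`. Every `y ∈ W_J` is uniquely `k d` with `k ∈ W_K`, `d ∈ D`, and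
`ℓ(k d) = ℓ k + ℓ d`; every element of `W_I w W_J` is uniquely `x (w d)` with `x ∈ W_I`,
`d ∈ D`, and `ℓ(x w d) = ℓ x + ℓ w + ℓ d`. The second factorisation rests on `w d` having no
left descent in `I`: by the exchange condition such a descent `s_i` either shortens `w`, or gives
`s_i w = w g` with `g ∈ W_J`, whence `ℓ g = 1` and `g` is a simple reflection of `K`,
contradicting the minimality of `d`. As `q` is multiplicative along length-additive products,
the two factorisations give `Σ_{W_I w W_J} q = N(I) q_w Σ_D q` and `N(J) = N(K) Σ_D q`.
-/

theorem finsum_mem_image2_eq_mul {α β γ R : Type*} [CommSemiring R] {f : α → β → γ}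
    {s : Set α} {t : Set β} (hs : s.Finite) (ht : t.Finite)
    (hf : Set.InjOn (Function.uncurry f) (s ×ˢ t))
    {Q : γ → R} {g : α → R} {h : β → R} (hQ : ∀ a ∈ s, ∀ b ∈ t, Q (f a b) = g a * h b) :
    ∑ᶠ z ∈ Set.image2 f s t, Q z = (∑ᶠ a ∈ s, g a) * ∑ᶠ b ∈ t, h b := by
  rw [← Set.image_uncurry_prod, finsum_mem_image hf,
    finsum_mem_eq_finite_toFinset_sum _ (hs.prod ht), finsum_mem_eq_finite_toFinset_sum _ hs,
    finsum_mem_eq_finite_toFinset_sum _ ht, Finset.sum_mul_sum, ← hs.toFinset_prod ht,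
    Finset.sum_product]
  refine Finset.sum_congr rfl fun a ha => Finset.sum_congr rfl fun b hb => ?_
  simp only [Set.Finite.mem_toFinset] at ha hb
  exact hQ a ha b hb

namespace CoxeterSystem

variable {B W : Type*} [Group W] {M : CoxeterMatrix B} (cs : CoxeterSystem M W)

local prefix:100 "s" => cs.simple
local prefix:100 "π" => cs.wordProd
local prefix:100 "ℓ" => cs.length
local prefix:100 "lis" => cs.leftInvSeq

theorem alternatingWord_two_mul_succ (i j : B) (m : ℕ) :
    alternatingWord i j (2 * (m + 1)) = i :: j :: alternatingWord i j (2 * m) := by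
  rw [mul_add, mul_one, alternatingWord_succ', alternatingWord_succ',
    if_neg (Nat.not_even_two_mul_add_one m), if_pos (even_two_mul m)]

theorem prod_map_alternatingWord_two_mul {G : Type*} [Monoid G] (f : B → G) (i j : B) (m : ℕ) :
    ((alternatingWord i j (2 * m)).map f).prod = (f i * f j) ^ m := by
  induction m with
  | zero => simp [alternatingWord]
  | succ m ih => rw [alternatingWord_two_mul_succ, List.map_cons, List.map_cons, List.prod_cons,
      List.prod_cons, ih, pow_succ', mul_assoc]

theorem drop_leftInvSeq_alternatingWord (i j : B) :
    (lis (alternatingWord i j (2 * M i j))).drop (M i j) =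
      (lis (alternatingWord i j (2 * M i j))).take (M i j) := by
  apply List.ext_getElem
  · simp only [List.length_drop, List.length_take, length_leftInvSeq, length_alternatingWord]
    omega
  · intro k h₁ _
    simp only [List.length_drop, length_leftInvSeq, length_alternatingWord] at h₁
    rw [List.getElem_drop, List.getElem_take,
      getElem_leftInvSeq_alternatingWord _ _ _ _ _ (by omega),
      getElem_leftInvSeq_alternatingWord _ _ _ _ _ (by omega), prod_alternatingWord_eq_mul_pow,
      prod_alternatingWord_eq_mul_pow, if_neg (Nat.not_even_two_mul_add_one _),
      if_neg (Nat.not_even_two_mul_add_one _)]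
    rw [show (2 * (M i j + k) + 1) / 2 = M i j + k by omega, show (2 * k + 1) / 2 = k by omega,
      pow_add, simple_mul_simple_pow', one_mul]

section ParityRepresentation

variable [DecidableEq W]

def parityAction (i : B) : Function.End (W × ZMod 2) :=
  fun p => (MulAut.conj (s i) p.1, p.2 + if p.1 = s i then 1 else 0)

theorem prod_map_parityAction_apply (ω : List B) (t : W) (ε : ZMod 2) :
    (ω.map cs.parityAction).prod (t, ε) =
      (MulAut.conj (π ω) t, ε + (lis ω).count (MulAut.conj (π ω) t)) := by
  induction ω with
  | nil => simp; rfl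
  | cons i ω ih =>
    change cs.parityAction i ((ω.map cs.parityAction).prod (t, ε)) = _
    have hconj := (MulAut.conj (s i)).injective
    have hfix (u : W) : s i = MulAut.conj (s i) u ↔ u = s i := by
      rw [eq_comm, hconj.eq_iff' (by simp : MulAut.conj (s i) (s i) = s i)]
    rw [ih, wordProd_cons, map_mul, MulAut.mul_apply, leftInvSeq, List.count_cons,
      List.count_map_of_injective _ _ hconj]
    simp only [parityAction, beq_iff_eq, hfix, Nat.cast_add, Nat.cast_ite, Nat.cast_one,
      Nat.cast_zero, add_assoc]

theorem isLiftable_parityAction : M.IsLiftable cs.parityAction := by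
  intro i j
  funext ⟨t, ε⟩
  have hπ : π (alternatingWord i j (2 * M i j)) = 1 := by
    rw [prod_alternatingWord_eq_mul_pow, if_pos (even_two_mul _),
      Nat.mul_div_cancel_left _ two_pos, simple_mul_simple_pow, one_mul]
  rw [← prod_map_alternatingWord_two_mul, prod_map_parityAction_apply, hπ, map_one,
    MulAut.one_apply, ← List.take_append_drop (M i j) (lis _), List.count_append,
    drop_leftInvSeq_alternatingWord, ← two_mul, Nat.cast_mul, Nat.cast_two,
    show (2 : ZMod 2) = 0 from rfl, zero_mul, add_zero]
  rfl

/-- Tits' representation of `W` on `W × ℤ/2`. Its existence means that the parity of the number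
of occurrences of a reflection in `lis ω` depends only on `π ω`, which drives the exchange
condition below. -/
noncomputable def parityRep : W →* Function.End (W × ZMod 2) :=
  cs.lift ⟨cs.parityAction, cs.isLiftable_parityAction⟩

theorem parityRep_simple (i : B) : cs.parityRep (s i) = cs.parityAction i :=
  cs.lift_apply_simple cs.isLiftable_parityAction i

theorem parityRep_wordProd (ω : List B) :
    cs.parityRep (π ω) = (ω.map cs.parityAction).prod := by
  simp [wordProd, map_list_prod, Function.comp_def, parityRep_simple]

end ParityRepresentation

theorem exists_simple_mul_wordProd_eq_eraseIdx {ω : List B} {i : B} (h : s i ∈ lis ω) :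
    ∃ k < ω.length, s i * π ω = π (ω.eraseIdx k) := by
  obtain ⟨k, hk, hki⟩ := List.mem_iff_getElem.mp h
  refine ⟨k, by simpa using hk, ?_⟩
  rw [← getD_leftInvSeq_mul_wordProd, List.getD_eq_getElem _ _ hk, hki]

theorem length_wordProd_eraseIdx_lt {ω : List B} {k : ℕ} (hk : k < ω.length) :
    ℓ (π (ω.eraseIdx k)) < ω.length :=
  (cs.length_wordProd_le _).trans_lt (by rw [List.length_eraseIdx_of_lt hk]; omega)

theorem simple_mem_leftInvSeq_of_isLeftDescent {ω : List B} {i : B}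
    (h : cs.IsLeftDescent (π ω) i) : s i ∈ lis ω := by
  classical
  obtain ⟨ω', hω', hω'_eq⟩ := cs.exists_isReduced (s i * π ω)
  have hπ : π ω = s i * π ω' := by rw [← hω'_eq, simple_mul_simple_cancel_left]
  set t := (π ω)⁻¹ * s i * π ω
  have ht : MulAut.conj (π ω) t = s i := by simp only [t, MulAut.conj_apply]; group
  have ht' : MulAut.conj (π ω') t = s i := by
    simp only [t, MulAut.conj_apply, ← hω'_eq]; group
  have hparity : ((lis ω).count (s i) : ZMod 2) = (lis ω').count (s i) + 1 := by
    have hsnd : (cs.parityRep (π ω) (t, 0)).2 =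
        (cs.parityRep (s i) (cs.parityRep (π ω') (t, 0))).2 := by
      rw [hπ, map_mul]; rfl
    rw [parityRep_simple, parityRep_wordProd, parityRep_wordProd, prod_map_parityAction_apply,
      prod_map_parityAction_apply, ht, ht'] at hsnd
    simpa [parityAction] using hsnd
  -- Otherwise `s i` occurs in `lis ω'`, and deleting the corresponding letter of `ω'` gives a
  -- word for `π ω` of length `ℓ (π ω) - 2`.
  by_contra hmem
  have hcount : (lis ω').count (s i) ≠ 0 := fun h0 => by
    rw [h0, List.count_eq_zero_of_not_mem hmem] at hparity
    exact absurd hparity (by decide)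
  obtain ⟨k, hk, hdel⟩ :=
    cs.exists_simple_mul_wordProd_eq_eraseIdx (List.count_pos_iff.mp (Nat.pos_of_ne_zero hcount))
  have hlt := cs.length_wordProd_eraseIdx_lt hk
  rw [← hdel, ← hπ, ← hω'.eq, ← hω'_eq] at hlt
  exact absurd h (by unfold IsLeftDescent; omega)

def parabolicSubgroup (A : Set B) : Subgroup W := Subgroup.closure (cs.simple '' A)

theorem simple_mem_parabolicSubgroup {A : Set B} {b : B} (hb : b ∈ A) :
    s b ∈ cs.parabolicSubgroup A :=
  Subgroup.subset_closure ⟨b, hb, rfl⟩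

theorem parabolicSubgroup_univ : cs.parabolicSubgroup Set.univ = ⊤ := by
  rw [parabolicSubgroup, Set.image_univ, subgroup_closure_range_simple]

theorem parabolicSubgroup_mono {A A' : Set B} (h : A ⊆ A') :
    cs.parabolicSubgroup A ≤ cs.parabolicSubgroup A' :=
  Subgroup.closure_mono (Set.image_mono h)

theorem wordProd_mem_parabolicSubgroup {A : Set B} {ω : List B} (hω : ∀ b ∈ ω, b ∈ A) :
    π ω ∈ cs.parabolicSubgroup A := by
  induction ω with
  | nil => exact one_mem _
  | cons b ω ih =>
    rw [wordProd_cons]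
    exact mul_mem (cs.simple_mem_parabolicSubgroup (hω b List.mem_cons_self))
      (ih fun c hc => hω c (List.mem_cons_of_mem b hc))

theorem exists_isReduced_of_mem_parabolicSubgroup {A : Set B} {u : W}
    (hu : u ∈ cs.parabolicSubgroup A) :
    ∃ ω : List B, cs.IsReduced ω ∧ (∀ b ∈ ω, b ∈ A) ∧ u = π ω := by
  have simple_mul (b : B) (hb : b ∈ A) (y : W)
      (hy : ∃ ω : List B, cs.IsReduced ω ∧ (∀ b ∈ ω, b ∈ A) ∧ y = π ω) :
      ∃ ω : List B, cs.IsReduced ω ∧ (∀ b ∈ ω, b ∈ A) ∧ s b * y = π ω := by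
    obtain ⟨ω, hω, hωA, rfl⟩ := hy
    rcases cs.length_simple_mul (π ω) b with hup | hdown
    · refine ⟨b :: ω, ?_, by simpa using ⟨hb, hωA⟩, (cs.wordProd_cons b ω).symm⟩
      rw [IsReduced, wordProd_cons, hup, hω.eq, List.length_cons]
    · obtain ⟨k, hk, hdel⟩ := cs.exists_simple_mul_wordProd_eq_eraseIdx
        (cs.simple_mem_leftInvSeq_of_isLeftDescent (ω := ω) (i := b)
          (by unfold IsLeftDescent; omega))
      refine ⟨ω.eraseIdx k, ?_, fun c hc => hωA c (List.mem_of_mem_eraseIdx hc), hdel⟩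
      rw [IsReduced, ← hdel, List.length_eraseIdx_of_lt hk, ← hω.eq]
      omega
  induction hu using Subgroup.closure_induction_left with
  | one => exact ⟨[], by simp [IsReduced], by simp, rfl⟩
  | mul_left x hx y _ ih =>
    obtain ⟨b, hb, rfl⟩ := hx
    exact simple_mul b hb y ih
  | inv_mul_cancel x hx y _ ih =>
    obtain ⟨b, hb, rfl⟩ := hx
    rw [inv_simple]
    exact simple_mul b hb y ih

theorem parabolicSubgroup_induction {A : Set B} {p : W → Prop} (one : p 1)
    (mul : ∀ b ∈ A, ∀ u ∈ cs.parabolicSubgroup A, ℓ (s b * u) = ℓ u + 1 → p u → p (s b * u))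
    {u : W} (hu : u ∈ cs.parabolicSubgroup A) : p u := by
  obtain ⟨ω, hω, hωA, rfl⟩ := cs.exists_isReduced_of_mem_parabolicSubgroup hu
  clear hu
  induction ω with
  | nil => exact one
  | cons b ω ih =>
    have hω' : cs.IsReduced ω := hω.drop 1
    have hωA' : ∀ c ∈ ω, c ∈ A := fun c hc => hωA c (List.mem_cons_of_mem b hc)
    rw [wordProd_cons]
    refine mul b (hωA b List.mem_cons_self) _ (cs.wordProd_mem_parabolicSubgroup hωA') ?_
      (ih hω' hωA')
    rw [← wordProd_cons, hω.eq, hω'.eq, List.length_cons]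

theorem exists_isLeftDescent_of_mem_parabolicSubgroup {A : Set B} {u : W}
    (hu : u ∈ cs.parabolicSubgroup A) (hne : u ≠ 1) : ∃ a ∈ A, cs.IsLeftDescent u a := by
  obtain ⟨ω, hω, hωA, rfl⟩ := cs.exists_isReduced_of_mem_parabolicSubgroup hu
  cases ω with
  | nil => exact absurd rfl hne
  | cons a ω =>
    refine ⟨a, hωA a List.mem_cons_self, ?_⟩
    rw [IsLeftDescent, wordProd_cons, simple_mul_simple_cancel_left, ← wordProd_cons, hω.eq,
      List.length_cons]
    exact Nat.lt_succ_of_le (cs.length_wordProd_le ω)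

theorem exists_eq_simple_of_length_eq_one {A : Set B} {u : W}
    (hu : u ∈ cs.parabolicSubgroup A) (h : ℓ u = 1) : ∃ a ∈ A, u = s a := by
  obtain ⟨ω, hω, hωA, rfl⟩ := cs.exists_isReduced_of_mem_parabolicSubgroup hu
  obtain ⟨a, rfl⟩ := List.length_eq_one_iff.mp (hω.eq ▸ h)
  exact ⟨a, hωA a List.mem_cons_self, cs.wordProd_singleton a⟩

theorem isLeftDescent_or_exists_of_isLeftDescent_mul {A : Set B} {u v : W} {i : B}
    (hv : v ∈ cs.parabolicSubgroup A) (h : cs.IsLeftDescent (u * v) i) :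
    cs.IsLeftDescent u i ∨
      ∃ v' ∈ cs.parabolicSubgroup A, s i * (u * v) = u * v' ∧ ℓ v' < ℓ v := by
  obtain ⟨α, hα, rfl⟩ := cs.exists_isReduced u
  obtain ⟨δ, hδ, hδA, rfl⟩ := cs.exists_isReduced_of_mem_parabolicSubgroup hv
  rw [← wordProd_append] at h ⊢
  obtain ⟨k, hk, hdel⟩ := cs.exists_simple_mul_wordProd_eq_eraseIdx
    (cs.simple_mem_leftInvSeq_of_isLeftDescent h)
  rw [wordProd_append] at hdel
  by_cases hkα : k < α.length
  · left
    rw [List.eraseIdx_append_of_lt_length hkα, wordProd_append, ← mul_assoc,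
      mul_left_inj] at hdel
    rw [IsLeftDescent, hdel, hα.eq]
    exact cs.length_wordProd_eraseIdx_lt hkα
  · right
    rw [List.length_append] at hk
    rw [List.eraseIdx_append_of_length_le (not_lt.mp hkα), wordProd_append] at hdel
    refine ⟨π (δ.eraseIdx (k - α.length)),
      cs.wordProd_mem_parabolicSubgroup fun b hb => hδA b (List.mem_of_mem_eraseIdx hb),
      by rw [wordProd_append, hdel], ?_⟩
    rw [hδ.eq]
    exact cs.length_wordProd_eraseIdx_lt (by omega)

theorem length_mul_eq_add_of_minimal {A : Set B} {v : W}
    (hv : ∀ y ∈ cs.parabolicSubgroup A, ℓ v ≤ ℓ (y * v)) {x : W}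
    (hx : x ∈ cs.parabolicSubgroup A) : ℓ (x * v) = ℓ x + ℓ v := by
  refine cs.parabolicSubgroup_induction (p := fun x => ℓ (x * v) = ℓ x + ℓ v) (by simp)
    (fun b hb x hx hbx ih => ?_) hx
  have hnot : ¬ cs.IsLeftDescent (x * v) b := by
    intro hdesc
    rcases cs.isLeftDescent_or_exists_of_isLeftDescent_mul
      (cs.parabolicSubgroup_univ ▸ Subgroup.mem_top v) hdesc with hx' | ⟨v', -, heq, hlt⟩
    · unfold IsLeftDescent at hx'
      omega
    · have hconj : x⁻¹ * s b * x ∈ cs.parabolicSubgroup A :=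
        mul_mem (mul_mem (inv_mem hx) (cs.simple_mem_parabolicSubgroup hb)) hx
      have hle := hv _ hconj
      rw [show x⁻¹ * s b * x * v = v' by simp only [mul_assoc, heq, inv_mul_cancel_left]] at hle
      omega
  rw [mul_assoc, hbx]
  rcases cs.length_simple_mul (x * v) b with h | h
  · omega
  · exact absurd (show ℓ (s b * (x * v)) < ℓ (x * v) by omega) hnot

theorem length_mul_eq_add_of_minimal' {A : Set B} {v : W}
    (hv : ∀ y ∈ cs.parabolicSubgroup A, ℓ v ≤ ℓ (v * y)) {y : W}
    (hy : y ∈ cs.parabolicSubgroup A) : ℓ (v * y) = ℓ v + ℓ y := by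
  have hv' : ∀ x ∈ cs.parabolicSubgroup A, ℓ v⁻¹ ≤ ℓ (x * v⁻¹) := fun x hx => by
    simpa [← cs.length_inv (x * v⁻¹)] using hv x⁻¹ (inv_mem hx)
  rw [← cs.length_inv, mul_inv_rev, cs.length_mul_eq_add_of_minimal hv' (inv_mem hy),
    cs.length_inv, cs.length_inv, add_comm]

theorem exists_minimal_mul (H : Subgroup W) (v : W) :
    ∃ x ∈ H, ∀ y ∈ H, ℓ (x * v) ≤ ℓ (y * (x * v)) := by
  obtain ⟨x, hx, hmin⟩ :=
    (InvImage.wf (fun x => ℓ (x * v)) wellFounded_lt).has_min (H : Set W) ⟨1, H.one_mem⟩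
  exact ⟨x, hx, fun y hy => by
    simpa [InvImage, mul_assoc] using hmin (y * x) (mul_mem hy hx)⟩

theorem eq_one_of_minimal {A : Set B} {v x : W}
    (hv : ∀ y ∈ cs.parabolicSubgroup A, ℓ v ≤ ℓ (y * v)) (hx : x ∈ cs.parabolicSubgroup A)
    (h : ℓ (x * v) ≤ ℓ v) : x = 1 := by
  have hsplit := cs.length_mul_eq_add_of_minimal hv hx
  exact cs.length_eq_zero_iff.mp (by omega)

theorem minimal_of_forall_not_isLeftDescent {A : Set B} {v : W}
    (hv : ∀ a ∈ A, ¬ cs.IsLeftDescent v a) :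
    ∀ y ∈ cs.parabolicSubgroup A, ℓ v ≤ ℓ (y * v) := by
  obtain ⟨x, hx, hmin⟩ := cs.exists_minimal_mul (cs.parabolicSubgroup A) v
  suffices x⁻¹ = 1 by simpa [inv_eq_one.mp this] using hmin
  by_contra hne
  obtain ⟨a, ha, hdesc⟩ := cs.exists_isLeftDescent_of_mem_parabolicSubgroup (inv_mem hx) hne
  have hsplit := cs.length_mul_eq_add_of_minimal hmin (inv_mem hx)
  rw [inv_mul_cancel_left] at hsplit
  refine hv a ha (lt_of_le_of_lt ?_ (show ℓ (s a * x⁻¹) + ℓ (x * v) < ℓ v by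
    unfold IsLeftDescent at hdesc; omega))
  simpa [mul_assoc] using cs.length_mul_le (s a * x⁻¹) (x * v)

theorem weight_mul_of_length_mul_eq_add {R : Type*} [CommMonoid R] {q : B → R} {Q : W → R}
    (hQ : ∀ ω : List B, cs.IsReduced ω → Q (π ω) = (ω.map q).prod) {u v : W}
    (huv : ℓ (u * v) = ℓ u + ℓ v) : Q (u * v) = Q u * Q v := by
  obtain ⟨α, hα, rfl⟩ := cs.exists_isReduced u
  obtain ⟨δ, hδ, rfl⟩ := cs.exists_isReduced v
  have hαδ : cs.IsReduced (α ++ δ) := by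
    rw [IsReduced, wordProd_append, huv, hα.eq, hδ.eq, List.length_append]
  rw [← wordProd_append, hQ _ hαδ, hQ _ hα, hQ _ hδ, List.map_append, List.prod_append]

theorem weight_pos {R : Type*} [CommSemiring R] [PartialOrder R] [IsStrictOrderedRing R]
    {q : B → R} (hq : ∀ i, 0 < q i) {Q : W → R}
    (hQ : ∀ ω : List B, cs.IsReduced ω → Q (π ω) = (ω.map q).prod) (v : W) : 0 < Q v := by
  obtain ⟨ω, hω, rfl⟩ := cs.exists_isReduced v
  rw [hQ ω hω]
  exact List.prod_pos fun a ha => by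
    obtain ⟨i, -, rfl⟩ := List.mem_map.mp ha
    exact hq i

theorem injOn_mul_of_minimal {A : Set B} {X : Set W}
    (hX : ∀ v ∈ X, ∀ y ∈ cs.parabolicSubgroup A, ℓ v ≤ ℓ (y * v)) :
    Set.InjOn (Function.uncurry (· * ·)) ((cs.parabolicSubgroup A : Set W) ×ˢ X) := by
  rintro ⟨x, v⟩ ⟨hx, hv⟩ ⟨x', v'⟩ ⟨hx', hv'⟩ (h : x * v = x' * v')
  have hv'_eq : v' = (x'⁻¹ * x) * v := by rw [mul_assoc, h, inv_mul_cancel_left]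
  have hmem : x'⁻¹ * x ∈ cs.parabolicSubgroup A := mul_mem (inv_mem hx') hx
  have hone : x'⁻¹ * x = 1 := cs.eq_one_of_minimal (hX v hv) hmem <| by
    have hle := hX v' hv' _ (inv_mem hmem)
    rwa [hv'_eq, inv_mul_cancel_left] at hle
  obtain rfl : x = x' := (inv_mul_eq_one.mp hone).symm
  simp_all

theorem finsum_mem_image2_mul_of_minimal {R : Type*} [CommSemiring R] {Q : W → R}
    (hQ : ∀ u v, ℓ (u * v) = ℓ u + ℓ v → Q (u * v) = Q u * Q v) {A : Set B} {X : Set W}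
    (hA : (cs.parabolicSubgroup A : Set W).Finite) (hXfin : X.Finite)
    (hX : ∀ v ∈ X, ∀ y ∈ cs.parabolicSubgroup A, ℓ v ≤ ℓ (y * v)) :
    ∑ᶠ z ∈ Set.image2 (· * ·) (cs.parabolicSubgroup A : Set W) X, Q z =
      (∑ᶠ x ∈ (cs.parabolicSubgroup A : Set W), Q x) * ∑ᶠ v ∈ X, Q v :=
  finsum_mem_image2_eq_mul hA hXfin (cs.injOn_mul_of_minimal hX) fun _ hx v hv =>
    hQ _ _ (cs.length_mul_eq_add_of_minimal (hX v hv) hx)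

def minCosetReps (A A' : Set B) : Set W :=
  {d | d ∈ cs.parabolicSubgroup A' ∧ ∀ k ∈ cs.parabolicSubgroup A, ℓ d ≤ ℓ (k * d)}

theorem image2_mul_minCosetReps {A A' : Set B} (h : A ⊆ A') :
    Set.image2 (· * ·) (cs.parabolicSubgroup A : Set W) (cs.minCosetReps A A') =
      cs.parabolicSubgroup A' := by
  ext y
  constructor
  · rintro ⟨k, hk, d, ⟨hd, -⟩, rfl⟩
    exact mul_mem (cs.parabolicSubgroup_mono h hk) hd
  · intro hy
    obtain ⟨k, hk, hmin⟩ := cs.exists_minimal_mul (cs.parabolicSubgroup A) y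
    exact ⟨k⁻¹, inv_mem hk, k * y,
      ⟨mul_mem (cs.parabolicSubgroup_mono h hk) hy, hmin⟩, inv_mul_cancel_left k y⟩

theorem finsum_mem_parabolicSubgroup_eq_mul {R : Type*} [CommSemiring R] {Q : W → R}
    (hQ : ∀ u v, ℓ (u * v) = ℓ u + ℓ v → Q (u * v) = Q u * Q v) {A A' : Set B} (h : A ⊆ A')
    (hA' : (cs.parabolicSubgroup A' : Set W).Finite) :
    ∑ᶠ y ∈ (cs.parabolicSubgroup A' : Set W), Q y =
      (∑ᶠ k ∈ (cs.parabolicSubgroup A : Set W), Q k) * ∑ᶠ d ∈ cs.minCosetReps A A', Q d := by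
  rw [← cs.image2_mul_minCosetReps h]
  exact cs.finsum_mem_image2_mul_of_minimal hQ (hA'.subset (cs.parabolicSubgroup_mono h))
    (hA'.subset fun d hd => hd.1) fun d hd => hd.2

/-- The index set `J ∩ w⁻¹Iw` of the paper. -/
def conjInter (I J : Set B) (w : W) : Set B := {b | b ∈ J ∧ w * s b * w⁻¹ ∈ cs.simple '' I}

section DoubleCoset

variable {I J : Set B} {w : W}

theorem parabolicSubgroup_conjInter :
    cs.parabolicSubgroup (cs.conjInter I J w) =
      Subgroup.closure {t | t ∈ cs.simple '' J ∧ w * t * w⁻¹ ∈ cs.simple '' I} := by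
  rw [parabolicSubgroup]
  congr 1
  ext t
  constructor
  · rintro ⟨b, ⟨hbJ, hbI⟩, rfl⟩
    exact ⟨⟨b, hbJ, rfl⟩, hbI⟩
  · rintro ⟨⟨b, hbJ, rfl⟩, hbI⟩
    exact ⟨b, ⟨hbJ, hbI⟩, rfl⟩

theorem conj_mem_of_mem_parabolicSubgroup_conjInter {k : W}
    (hk : k ∈ cs.parabolicSubgroup (cs.conjInter I J w)) :
    w * k * w⁻¹ ∈ cs.parabolicSubgroup I := by
  have hle : cs.parabolicSubgroup (cs.conjInter I J w) ≤
      (cs.parabolicSubgroup I).comap (MulAut.conj w).toMonoidHom := by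
    refine (Subgroup.closure_le _).mpr ?_
    rintro _ ⟨b, ⟨-, a, ha, hab⟩, rfl⟩
    simpa [← hab] using cs.simple_mem_parabolicSubgroup ha
  simpa using hle hk

theorem doubleCoset_eq_image2 :
    {z | ∃ x ∈ cs.parabolicSubgroup I, ∃ y ∈ cs.parabolicSubgroup J, z = x * w * y} =
      Set.image2 (· * ·) (cs.parabolicSubgroup I : Set W)
        ((w * ·) '' cs.minCosetReps (cs.conjInter I J w) J) := by
  ext z
  constructor
  · rintro ⟨x, hx, y, hy, rfl⟩
    rw [← SetLike.mem_coe, ← cs.image2_mul_minCosetReps (A := cs.conjInter I J w)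
      fun b hb => hb.1] at hy
    obtain ⟨k, hk, d, hd, rfl⟩ := hy
    refine ⟨x * (w * k * w⁻¹), mul_mem hx (cs.conj_mem_of_mem_parabolicSubgroup_conjInter hk),
      w * d, ⟨d, hd, rfl⟩, by group⟩
  · rintro ⟨x, hx, _, ⟨d, hd, rfl⟩, rfl⟩
    exact ⟨x, hx, d, hd.1, (mul_assoc x w d).symm⟩

theorem minimal_mul_of_mem_minCosetReps
    (hw : ∀ x ∈ cs.parabolicSubgroup I, ∀ y ∈ cs.parabolicSubgroup J, ℓ w ≤ ℓ (x * w * y))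
    {d : W} (hd : d ∈ cs.minCosetReps (cs.conjInter I J w) J) :
    ∀ x ∈ cs.parabolicSubgroup I, ℓ (w * d) ≤ ℓ (x * (w * d)) := by
  obtain ⟨hdJ, hdmin⟩ := hd
  have hwR : ∀ y ∈ cs.parabolicSubgroup J, ℓ w ≤ ℓ (w * y) := fun y hy => by
    simpa using hw 1 (one_mem _) y hy
  refine cs.minimal_of_forall_not_isLeftDescent fun i hi hdesc => ?_
  rcases cs.isLeftDescent_or_exists_of_isLeftDescent_mul hdJ hdesc with
    hwi | ⟨v, hvJ, heq, hlt⟩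
  · have hle := hw (s i) (cs.simple_mem_parabolicSubgroup hi) 1 (one_mem _)
    rw [mul_one] at hle
    exact absurd hwi (not_lt.mpr hle)
  · set g := v * d⁻¹
    have hgJ : g ∈ cs.parabolicSubgroup J := mul_mem hvJ (inv_mem hdJ)
    have hwg : w * g = s i * w := by
      simp only [g, ← mul_assoc, ← heq]
      group
    have hg : ℓ g = 1 := by
      have h₁ := cs.length_mul_eq_add_of_minimal' hwR hgJ
      have h₂ := cs.length_simple_mul_ne w i
      have h₃ := cs.length_mul_le (s i) w
      rw [hwg] at h₁
      rw [length_simple] at h₃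
      omega
    obtain ⟨c, hcJ, hgc⟩ := cs.exists_eq_simple_of_length_eq_one hgJ hg
    have hgK : g ∈ cs.parabolicSubgroup (cs.conjInter I J w) := by
      rw [hgc]
      refine cs.simple_mem_parabolicSubgroup ⟨hcJ, i, hi, ?_⟩
      rw [← hgc, hwg, mul_inv_cancel_right]
    have hle := hdmin g hgK
    rw [show g * d = v by simp [g]] at hle
    omega

theorem finsum_mem_doubleCoset {R : Type*} [CommSemiring R] {Q : W → R}
    (hQ : ∀ u v, ℓ (u * v) = ℓ u + ℓ v → Q (u * v) = Q u * Q v)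
    (hw : ∀ x ∈ cs.parabolicSubgroup I, ∀ y ∈ cs.parabolicSubgroup J, ℓ w ≤ ℓ (x * w * y))
    (hI : (cs.parabolicSubgroup I : Set W).Finite) (hJ : (cs.parabolicSubgroup J : Set W).Finite) :
    ∑ᶠ z ∈ {z | ∃ x ∈ cs.parabolicSubgroup I, ∃ y ∈ cs.parabolicSubgroup J, z = x * w * y}, Q z =
      (∑ᶠ x ∈ (cs.parabolicSubgroup I : Set W), Q x) * Q w *
        ∑ᶠ d ∈ cs.minCosetReps (cs.conjInter I J w) J, Q d := by
  have hD : (cs.minCosetReps (cs.conjInter I J w) J).Finite := hJ.subset fun d hd => hd.1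
  have hwR : ∀ y ∈ cs.parabolicSubgroup J, ℓ w ≤ ℓ (w * y) := fun y hy => by
    simpa using hw 1 (one_mem _) y hy
  rw [cs.doubleCoset_eq_image2, cs.finsum_mem_image2_mul_of_minimal hQ hI (hD.image _)
      (by rintro _ ⟨d, hd, rfl⟩; exact cs.minimal_mul_of_mem_minCosetReps hw hd),
    finsum_mem_image (mul_right_injective w).injOn,
    finsum_mem_congr rfl fun d hd => hQ w d (cs.length_mul_eq_add_of_minimal' hwR hd.1),
    ← mul_finsum_mem' _ _ hD, mul_assoc]

end DoubleCoset

end CoxeterSystem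

theorem statement5_general {B W : Type*} [Group W] {M : CoxeterMatrix B} (cs : CoxeterSystem M W)
    (q : B → ℝ) (hqpos : ∀ i, 0 < q i)
    -- `Q` is the multiplicative extension of `q` along reduced words
    (Q : W → ℝ) (hQ : ∀ ω : List B, cs.IsReduced ω → Q (cs.wordProd ω) = (ω.map q).prod)
    (I J : Set B) (w : W)
    (WI WJ WK : Subgroup W)
    (hWI : WI = Subgroup.closure (cs.simple '' I))
    (hWJ : WJ = Subgroup.closure (cs.simple '' J))
    -- `WK` is the standard parabolic on `J ∩ w⁻¹ I w`
    (hWK : WK = Subgroup.closure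
      {t | t ∈ cs.simple '' J ∧ w * t * w⁻¹ ∈ cs.simple '' I})
    -- `I` and `J` are spherical
    (hIfin : (WI : Set W).Finite) (hJfin : (WJ : Set W).Finite)
    -- `w` is the minimal length representative of `W_I w W_J`
    (hw : ∀ x ∈ WI, ∀ y ∈ WJ, cs.length w ≤ cs.length (x * w * y))
    (N : Set W → ℝ) (hN : ∀ K : Set W, N K = ∑ᶠ v ∈ K, Q v) :
    (∑ᶠ z ∈ {z : W | ∃ x ∈ WI, ∃ y ∈ WJ, z = x * w * y}, Q z) =
      N (WI : Set W) * Q w * N (WJ : Set W) / N (WK : Set W) := by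
  rw [← cs.parabolicSubgroup_conjInter] at hWK
  change WI = cs.parabolicSubgroup I at hWI
  change WJ = cs.parabolicSubgroup J at hWJ
  subst hWI hWJ hWK
  have hQmul (u v : W) (h : cs.length (u * v) = cs.length u + cs.length v) :
      Q (u * v) = Q u * Q v :=
    cs.weight_mul_of_length_mul_eq_add hQ h
  have hKJ : cs.conjInter I J w ⊆ J := fun b hb => hb.1
  have hKpos : 0 < ∑ᶠ k ∈ (cs.parabolicSubgroup (cs.conjInter I J w) : Set W), Q k := by
    rw [finsum_mem_eq_finite_toFinset_sum _ (hJfin.subset (cs.parabolicSubgroup_mono hKJ))]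
    exact Finset.sum_pos (fun v _ => cs.weight_pos hqpos hQ v) ⟨1, by simp⟩
  simp only [hN]
  rw [cs.finsum_mem_doubleCoset hQmul hw hIfin hJfin,
    cs.finsum_mem_parabolicSubgroup_eq_mul hQmul hKJ hJfin]
  field_simp

/-- Theorem 2.1 of the paper, Coxeter-combinatorial form. Let `(W,S)` be a
Coxeter system with a positive weight function `q_s` constant on generators joined by odd
bonds (so that `q_w`, the product of the `q_s` over a reduced expression of `w`, is well
defined), and let `I, J ⊆ S` with `W_I, W_J` finite. If `w` is the minimal length
representative of `W_I w W_J` then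
`Σ_{z ∈ W_I w W_J} q_z = N(I) · q_w · N(J) / N(J ∩ w⁻¹ I w)`,
where `N(K) = Σ_{v ∈ W_K} q_v` and `J ∩ w⁻¹Iw = {t ∈ J : w t w⁻¹ ∈ I}`. -/
theorem statement5 {B W : Type*} [Group W] {M : CoxeterMatrix B} (cs : CoxeterSystem M W)
    (q : B → ℝ) (hqpos : ∀ i, 0 < q i)
    (hqodd : ∀ i j : B, Odd (M i j) → q i = q j)
    -- `Q` is the multiplicative extension of `q` along reduced words
    (Q : W → ℝ) (hQ : ∀ ω : List B, cs.IsReduced ω → Q (cs.wordProd ω) = (ω.map q).prod)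
    (I J : Set B) (w : W)
    (WI WJ WK : Subgroup W)
    (hWI : WI = Subgroup.closure (cs.simple '' I))
    (hWJ : WJ = Subgroup.closure (cs.simple '' J))
    -- `WK` is the standard parabolic on `J ∩ w⁻¹ I w`
    (hWK : WK = Subgroup.closure
      {t | t ∈ cs.simple '' J ∧ w * t * w⁻¹ ∈ cs.simple '' I})
    -- `I` and `J` are spherical
    (hIfin : (WI : Set W).Finite) (hJfin : (WJ : Set W).Finite)
    -- `w` is the minimal length representative of `W_I w W_J`
    (hw : ∀ x ∈ WI, ∀ y ∈ WJ, cs.length w ≤ cs.length (x * w * y))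
    (N : Set W → ℝ) (hN : ∀ K : Set W, N K = ∑ᶠ v ∈ K, Q v) :
    (∑ᶠ z ∈ {z : W | ∃ x ∈ WI, ∃ y ∈ WJ, z = x * w * y}, Q z) =
      N (WI : Set W) * Q w * N (WJ : Set W) / N (WK : Set W) :=
  statement5_general cs q hqpos Q hQ I J w WI WJ WK hWI hWJ hWK hIfin hJfin hw N hN
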